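/- Let T ~ N(μ, σ²) with σ > 0 be a real-valued Gaussian random variable and let κ be a real constant. Then the expected tardiness satisfies E[max(0, T − κ)] = ((μ − κ)/2)·(1 + erf((μ − κ)/(σ·√2))) + (σ/√(2π))·exp(−(μ − κ)²/(2σ²)). -/

import Mathlib

open MeasureTheory ProbabilityTheory

/-- The Gauss error function `erf t = (2/√π) ∫₀ᵗ exp(−τ²) dτ`. -/
noncomputable def erf (t : ℝ) : ℝ :=
  (2 / Real.sqrt Real.pi) * ∫ τ in (0:ℝ)..t, Real.exp (-τ ^ 2)


open Real Filter Topology Set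
open scoped ENNReal NNReal

lemma erf_hasDerivAt (t : ℝ) :
    HasDerivAt erf (2 / Real.sqrt Real.pi * Real.exp (-t ^ 2)) t := by
  have hc : Continuous fun τ : ℝ => Real.exp (-τ ^ 2) := by continuity
  have h := intervalIntegral.integral_hasDerivAt_right (hc.intervalIntegrable 0 t)
    (hc.stronglyMeasurableAtFilter _ _) hc.continuousAt
  exact h.const_mul (2 / Real.sqrt Real.pi)

lemma erf_neg (t : ℝ) : erf (-t) = - erf t := by
  have h := intervalIntegral.integral_comp_neg (a := (0:ℝ)) (b := t)
    (fun τ => Real.exp (-τ ^ 2))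
  simp only [neg_zero, neg_neg, even_two, Even.neg_pow] at h
  unfold erf
  rw [show (∫ τ in (0:ℝ)..(-t), Real.exp (-τ ^ 2)) = - ∫ τ in (0:ℝ)..t, Real.exp (-τ ^ 2) by
    rw [intervalIntegral.integral_symm, ← h]]
  ring

lemma integrableOn_exp_neg_sq : Integrable (fun τ : ℝ => Real.exp (-τ ^ 2)) := by
  simpa using integrable_exp_neg_mul_sq (one_pos)

lemma erf_tendsto_one : Tendsto erf atTop (𝓝 1) := by
  have hint : IntegrableOn (fun τ : ℝ => Real.exp (-τ ^ 2)) (Ioi 0) :=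
    integrableOn_exp_neg_sq.integrableOn
  have h := intervalIntegral_tendsto_integral_Ioi 0 hint tendsto_id
  have hval : (∫ τ in Ioi (0:ℝ), Real.exp (-τ ^ 2)) = Real.sqrt Real.pi / 2 := by
    simpa using integral_gaussian_Ioi 1
  rw [hval] at h
  have := h.const_mul (2 / Real.sqrt Real.pi)
  have hπ : Real.sqrt Real.pi ≠ 0 := by positivity
  have heq : 2 / Real.sqrt Real.pi * (Real.sqrt Real.pi / 2) = 1 := by field_simp
  rw [heq] at this
  refine this.congr fun k => ?_
  simp [erf]

/-- For `T ~ N(μ, σ²)` with `σ > 0` and a deadline `κ`, the expected tardiness is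
`E[max(0, T − κ)] = ((μ − κ)/2)(1 + erf((μ − κ)/(σ√2))) + (σ/√(2π)) exp(−(μ − κ)²/(2σ²))`. -/
theorem expected_tardiness_of_gaussian
    {Ω : Type*} [MeasurableSpace Ω] (P : Measure Ω) [IsProbabilityMeasure P]
    (T : Ω → ℝ) (hT : Measurable T)
    (μ σ κ : ℝ) (hσ : 0 < σ)
    (hTd : Measure.map T P = gaussianReal μ (σ ^ 2).toNNReal) :
    ∫ ω, max 0 (T ω - κ) ∂P =
      ((μ - κ) / 2) * (1 + erf ((μ - κ) / (σ * Real.sqrt 2)))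
        + (σ / Real.sqrt (2 * Real.pi)) * Real.exp (-(μ - κ) ^ 2 / (2 * σ ^ 2)) := by
  have hσ2 : (0:ℝ) < σ ^ 2 := by positivity
  have hv : (σ ^ 2).toNNReal ≠ 0 := by
    simp only [ne_eq, Real.toNNReal_eq_zero, not_le]; exact hσ2
  set v := (σ ^ 2).toNNReal with hvdef
  have hvR : (v : ℝ) = σ ^ 2 := Real.coe_toNNReal _ hσ2.le
  -- the explicit density
  set p : ℝ → ℝ := fun x => (Real.sqrt (2 * Real.pi) * σ)⁻¹ *
    Real.exp (-(x - μ) ^ 2 / (2 * σ ^ 2)) with hpdef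
  have hpdf : gaussianPDFReal μ v = p := by
    funext x
    rw [gaussianPDFReal, hvR]
    congr 2
    rw [show 2 * Real.pi * σ ^ 2 = (2 * Real.pi) * σ ^ 2 by ring,
      Real.sqrt_mul (by positivity), Real.sqrt_sq hσ.le]
  -- Step 1: transfer to the Gaussian measure and its density
  have hmax : AEStronglyMeasurable (fun x : ℝ => max 0 (x - κ)) (Measure.map T P) :=
    (continuous_const.max (continuous_id.sub continuous_const)).aestronglyMeasurable
  have h1 : ∫ ω, max 0 (T ω - κ) ∂P = ∫ x, p x * max 0 (x - κ) := by
    rw [← integral_map hT.aemeasurable hmax, hTd, gaussianReal_of_var_ne_zero μ hv]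
    have : gaussianPDF μ v = fun x => ((gaussianPDFReal μ v x).toNNReal : ℝ≥0∞) := rfl
    rw [this, integral_withDensity_eq_integral_smul
      ((measurable_gaussianPDFReal μ v).real_toNNReal) _]
    congr 1
    funext x
    rw [NNReal.smul_def, smul_eq_mul, Real.coe_toNNReal _ (gaussianPDFReal_nonneg μ v x), hpdf]
  rw [h1]
  -- Step 2: indicator form
  have h2 : (fun x => p x * max 0 (x - κ)) = (Ioi κ).indicator (fun x => p x * (x - κ)) := by
    funext x
    by_cases hx : κ < x
    · rw [indicator_of_mem (mem_Ioi.mpr hx), max_eq_right (by linarith)]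
    · rw [indicator_of_notMem (by simpa using hx), max_eq_left (by push_neg at hx; linarith),
        mul_zero]
  rw [h2, integral_indicator measurableSet_Ioi]
  -- Step 3: FTC on (κ, ∞)
  set F : ℝ → ℝ := fun x => -σ ^ 2 * p x
      + (μ - κ) * (2⁻¹ * (1 + erf ((x - μ) / (σ * Real.sqrt 2)))) with hFdef
  have hs2 : (0:ℝ) < Real.sqrt 2 := by positivity
  have hsπ : (0:ℝ) < Real.sqrt Real.pi := Real.sqrt_pos.mpr Real.pi_pos
  have hs2π : Real.sqrt (2 * Real.pi) = Real.sqrt 2 * Real.sqrt Real.pi :=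
    Real.sqrt_mul (by norm_num) _
  have hsq2 : Real.sqrt 2 * Real.sqrt 2 = 2 := Real.mul_self_sqrt (by norm_num)
  have hderiv : ∀ x ∈ Ici κ, HasDerivAt F (p x * (x - κ)) x := by
    intro x _
    have hu : HasDerivAt (fun x : ℝ => -(x - μ) ^ 2 / (2 * σ ^ 2))
        (-(2 * (x - μ)) / (2 * σ ^ 2)) x := by
      have h1 : HasDerivAt (fun x : ℝ => (x - μ) ^ 2) (2 * (x - μ)) x := by
        have h0 := ((hasDerivAt_id x).sub_const μ).pow 2
        simp at h0
        exact h0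
      exact h1.neg.div_const _
    have hp : HasDerivAt p ((Real.sqrt (2 * Real.pi) * σ)⁻¹ *
        (Real.exp (-(x - μ) ^ 2 / (2 * σ ^ 2)) * (-(2 * (x - μ)) / (2 * σ ^ 2)))) x :=
      (hu.exp).const_mul _
    have hin : HasDerivAt (fun x : ℝ => (x - μ) / (σ * Real.sqrt 2))
        (1 / (σ * Real.sqrt 2)) x := by
      simpa using ((hasDerivAt_id x).sub_const μ).div_const (σ * Real.sqrt 2)
    have herf : HasDerivAt (fun x : ℝ => erf ((x - μ) / (σ * Real.sqrt 2)))
        ((2 / Real.sqrt Real.pi * Real.exp (-((x - μ) / (σ * Real.sqrt 2)) ^ 2))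
          * (1 / (σ * Real.sqrt 2))) x :=
      (erf_hasDerivAt _).comp x hin
    have hF' := ((hp.const_mul (-σ ^ 2)).add
      (((herf.const_add 1).const_mul 2⁻¹).const_mul (μ - κ)))
    refine hF'.congr_deriv (Eq.symm ?_)
    have hexp : (-((x - μ) / (σ * Real.sqrt 2)) ^ 2) = -(x - μ) ^ 2 / (2 * σ ^ 2) := by
      rw [div_pow, mul_pow]
      rw [show (Real.sqrt 2) ^ 2 = 2 by rw [sq, hsq2]]
      ring
    rw [hexp, hpdef]
    simp only []
    rw [hs2π]
    have h2' : Real.sqrt 2 ≠ 0 := hs2.ne'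
    have hπ' : Real.sqrt Real.pi ≠ 0 := hsπ.ne'
    have hσ' : σ ≠ 0 := hσ.ne'
    field_simp
    ring_nf
  have hint : IntegrableOn (fun x => p x * (x - κ)) (Ioi κ) := by
    have hb : (0:ℝ) < (2 * σ ^ 2)⁻¹ := by positivity
    have h1 : Integrable (fun x : ℝ => x * Real.exp (-(2 * σ ^ 2)⁻¹ * x ^ 2)) :=
      integrable_mul_exp_neg_mul_sq hb
    have h2 : Integrable (fun x : ℝ => Real.exp (-(2 * σ ^ 2)⁻¹ * x ^ 2)) :=
      integrable_exp_neg_mul_sq hb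
    have h3 : Integrable (fun x : ℝ =>
        (x - μ) * Real.exp (-(2 * σ ^ 2)⁻¹ * (x - μ) ^ 2)) := h1.comp_sub_right μ
    have h4 : Integrable (fun x : ℝ =>
        Real.exp (-(2 * σ ^ 2)⁻¹ * (x - μ) ^ 2)) := h2.comp_sub_right μ
    have h5 : Integrable (fun x => p x * (x - κ)) := by
      have h6 := ((h3.add (h4.mul_const (μ - κ))).const_mul (Real.sqrt (2 * Real.pi) * σ)⁻¹)
      refine h6.congr (Eventually.of_forall fun x => ?_)
      simp only [Pi.add_apply, hpdef]
      rw [show (-(x - μ) ^ 2 / (2 * σ ^ 2)) = -(2 * σ ^ 2)⁻¹ * (x - μ) ^ 2 by ring]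
      ring
    exact h5.integrableOn
  have hlim : Tendsto F atTop (𝓝 (μ - κ)) := by
    have hxm : Tendsto (fun x : ℝ => x - μ) atTop atTop :=
      tendsto_atTop_add_const_right _ _ tendsto_id
    have hexp : Tendsto (fun x : ℝ => Real.exp (-(x - μ) ^ 2 / (2 * σ ^ 2))) atTop (𝓝 0) := by
      apply Real.tendsto_exp_atBot.comp
      have h1 : Tendsto (fun x : ℝ => (x - μ) ^ 2 / (2 * σ ^ 2)) atTop atTop :=
        ((tendsto_pow_atTop two_ne_zero).comp hxm).atTop_div_const (by positivity)
      have := tendsto_neg_atTop_atBot.comp h1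
      refine this.congr fun x => ?_
      simp [neg_div]
    have hperf : Tendsto (fun x : ℝ => erf ((x - μ) / (σ * Real.sqrt 2))) atTop (𝓝 1) :=
      erf_tendsto_one.comp (hxm.atTop_div_const (by positivity))
    have h1 : Tendsto F atTop
        (𝓝 (-σ ^ 2 * ((Real.sqrt (2 * Real.pi) * σ)⁻¹ * 0)
          + (μ - κ) * (2⁻¹ * (1 + 1)))) := by
      exact ((((hexp.const_mul _).const_mul _)).add
        (((hperf.const_add 1).const_mul 2⁻¹).const_mul (μ - κ)))
    have heq : -σ ^ 2 * ((Real.sqrt (2 * Real.pi) * σ)⁻¹ * 0) + (μ - κ) * (2⁻¹ * (1 + 1))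
        = μ - κ := by ring
    rwa [heq] at h1
  have hcont : ∀ x ∈ Ici κ, HasDerivAt F (p x * (x - κ)) x := hderiv
  have key := integral_Ioi_of_hasDerivAt_of_tendsto' hcont hint hlim
  rw [key]
  -- Step 4: final arithmetic
  have herfneg : erf ((κ - μ) / (σ * Real.sqrt 2)) = - erf ((μ - κ) / (σ * Real.sqrt 2)) := by
    rw [show (κ - μ) / (σ * Real.sqrt 2) = -((μ - κ) / (σ * Real.sqrt 2)) by ring, erf_neg]
  rw [hFdef]
  simp only [hpdef]
  rw [herfneg]
  rw [show (-(κ - μ) ^ 2 / (2 * σ ^ 2)) = (-(μ - κ) ^ 2 / (2 * σ ^ 2)) by ring]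
  field_simp
  ring
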